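/- Let |φ_n⟩, |φ_m⟩ satisfy L_k|φ_j⟩ = λ_{k,j}|φ_j⟩ for all k and (iH + Σ_k γ_k L_k†L_k)|φ_j⟩ = μ_j|φ_j⟩ with Σ_k γ_k|λ_{k,j}|² = Re(μ_j) (j = n, m). If additionally Re[Σ_k γ_k(2λ_{k,n} λ̄_{k,m} - |λ_{k,n}|² - |λ_{k,m}|²)] = 0, then |φ_n⟩⟨φ_m| is an eigenmode of the Lindbladian with purely imaginary eigenvalue. -/

import Mathlib

open Matrix

/-- The Lindbladian with rates `γ`:
`L(ρ) = -i[H,ρ] + Σ_k γ_k (2 L_k ρ L_kᴴ - L_kᴴL_k ρ - ρ L_kᴴL_k)`. -/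
noncomputable def lindbladianRates {N K : ℕ} (H : Matrix (Fin N) (Fin N) ℂ)
    (L : Fin K → Matrix (Fin N) (Fin N) ℂ) (γ : Fin K → ℝ)
    (ρ : Matrix (Fin N) (Fin N) ℂ) : Matrix (Fin N) (Fin N) ℂ :=
  (-Complex.I) • (H * ρ - ρ * H)
    + ∑ k, (γ k : ℂ) •
        ((2 : ℂ) • (L k * ρ * (L k)ᴴ) - ((L k)ᴴ * L k * ρ + ρ * ((L k)ᴴ * L k)))

lemma mul_vecMulVec' {N : ℕ} (M : Matrix (Fin N) (Fin N) ℂ) (u v : Fin N → ℂ) :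
    M * vecMulVec u v = vecMulVec (M.mulVec u) v := by
  ext i j
  simp [Matrix.mul_apply, Matrix.vecMulVec_apply, Matrix.mulVec, dotProduct,
    Finset.sum_mul, mul_assoc]

lemma vecMulVec_mul_conjT' {N : ℕ} (M : Matrix (Fin N) (Fin N) ℂ) (u w : Fin N → ℂ) :
    vecMulVec u (star w) * Mᴴ = vecMulVec u (star (M.mulVec w)) := by
  ext i j
  simp only [Matrix.mul_apply, Matrix.vecMulVec_apply, Matrix.conjTranspose_apply,
    Pi.star_apply, Matrix.mulVec, dotProduct, star_sum, star_mul', Finset.mul_sum]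
  exact Finset.sum_congr rfl fun k _ => by ring

lemma vecMulVec_smul_left' {N : ℕ} (c : ℂ) (u v : Fin N → ℂ) :
    vecMulVec (c • u) v = c • vecMulVec u v := by
  ext i j; simp [Matrix.vecMulVec_apply, mul_assoc]

lemma vecMulVec_smul_right' {N : ℕ} (c : ℂ) (u v : Fin N → ℂ) :
    vecMulVec u (c • v) = c • vecMulVec u v := by
  ext i j; simp [Matrix.vecMulVec_apply]; ring


/-- Supplementary Theorem 1, sufficiency. Given simultaneous eigenvectors
`φn`, `φm` of the `L k` and of `iH + Σ_k γ_k L_kᴴL_k` with `Σ_k γ_k |λ_{k,j}|² = Re μ_j`, if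
`Re[Σ_k γ_k (2 λ_{k,n} conj λ_{k,m} - |λ_{k,n}|² - |λ_{k,m}|²)] = 0` then `|φn⟩⟨φm|` is an
eigenmode of the Lindbladian with purely imaginary eigenvalue. -/
theorem coherence_purely_imaginary_eigenmode {N K : ℕ}
    (H : Matrix (Fin N) (Fin N) ℂ) (L : Fin K → Matrix (Fin N) (Fin N) ℂ)
    (γ : Fin K → ℝ) (hγ : ∀ k, 0 ≤ γ k)
    (φn φm : Fin N → ℂ) (lamn lamm : Fin K → ℂ) (μn μm : ℂ)
    (hH : H.IsHermitian)
    (hφn : dotProduct (star φn) φn = 1)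
    (hφm : dotProduct (star φm) φm = 1)
    (hLn : ∀ k, (L k).mulVec φn = lamn k • φn)
    (hLm : ∀ k, (L k).mulVec φm = lamm k • φm)
    (hEffn : (Complex.I • H + ∑ k, (γ k : ℂ) • ((L k)ᴴ * L k)).mulVec φn = μn • φn)
    (hEffm : (Complex.I • H + ∑ k, (γ k : ℂ) • ((L k)ᴴ * L k)).mulVec φm = μm • φm)
    (hRen : ∑ k, γ k * Complex.normSq (lamn k) = μn.re)
    (hRem : ∑ k, γ k * Complex.normSq (lamm k) = μm.re)
    (hcond : (∑ k, (γ k : ℂ) *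
        (2 * lamn k * (starRingEnd ℂ) (lamm k)
          - Complex.normSq (lamn k) - Complex.normSq (lamm k))).re = 0) :
    ∃ ω : ℝ, lindbladianRates H L γ (vecMulVec φn (star φm))
      = (Complex.I * ω) • vecMulVec φn (star φm) := by
  classical
  set S : Matrix (Fin N) (Fin N) ℂ := ∑ k, (γ k : ℂ) • ((L k)ᴴ * L k) with hS
  set ρ : Matrix (Fin N) (Fin N) ℂ := vecMulVec φn (star φm) with hρ
  -- A * ρ = μn • ρ
  have hAρ : (Complex.I • H + S) * ρ = μn • ρ := by
    rw [hρ, mul_vecMulVec', hEffn, vecMulVec_smul_left']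
  -- conjTranspose of A
  have hSH : Sᴴ = S := by
    rw [hS, Matrix.conjTranspose_sum]
    refine Finset.sum_congr rfl fun k _ => ?_
    rw [Matrix.conjTranspose_smul, Matrix.conjTranspose_mul, Matrix.conjTranspose_conjTranspose]
    simp [Complex.star_def, Complex.conj_ofReal]
  have hAH : (Complex.I • H + S)ᴴ = (-Complex.I) • H + S := by
    rw [Matrix.conjTranspose_add, Matrix.conjTranspose_smul, hH.eq, hSH]
    simp [Complex.star_def, Complex.conj_I]
  have hρA : ρ * ((-Complex.I) • H + S) = (starRingEnd ℂ) μm • ρ := by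
    rw [← hAH, hρ, vecMulVec_mul_conjT', hEffm, star_smul, vecMulVec_smul_right']
    rfl
  have hLρL : ∀ k, L k * ρ * (L k)ᴴ = (lamn k * (starRingEnd ℂ) (lamm k)) • ρ := by
    intro k
    rw [hρ, mul_vecMulVec', hLn, vecMulVec_smul_left', Matrix.smul_mul,
      vecMulVec_mul_conjT', hLm, star_smul, vecMulVec_smul_right', smul_smul]
    rfl
  -- individual H products
  have hHρ : Complex.I • (H * ρ) = μn • ρ - S * ρ := by
    have := hAρ
    rw [Matrix.add_mul, Matrix.smul_mul] at this
    linear_combination (norm := module) this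
  have hρH : Complex.I • (ρ * H) = ρ * S - (starRingEnd ℂ) μm • ρ := by
    have h := hρA
    rw [Matrix.mul_add, Matrix.mul_smul] at h
    linear_combination (norm := module) -h
  -- sum rewrites
  have hsum1 : ∑ k, (γ k : ℂ) • ((L k)ᴴ * L k * ρ) = S * ρ := by
    rw [hS, Finset.sum_mul]
    exact Finset.sum_congr rfl fun k _ => (Matrix.smul_mul _ _ _).symm
  have hsum2 : ∑ k, (γ k : ℂ) • (ρ * ((L k)ᴴ * L k)) = ρ * S := by
    rw [hS, Finset.mul_sum]
    exact Finset.sum_congr rfl fun k _ => (Matrix.mul_smul _ _ _).symm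
  set t : ℂ := ∑ k, (γ k : ℂ) * 2 * (lamn k * (starRingEnd ℂ) (lamm k)) with ht
  have hsum3 : ∑ k, (γ k : ℂ) • ((2:ℂ) • (L k * ρ * (L k)ᴴ)) = t • ρ := by
    rw [ht, Finset.sum_smul]
    refine Finset.sum_congr rfl fun k _ => ?_
    rw [hLρL k, smul_smul, smul_smul, mul_assoc]
  set c : ℂ := -μn - (starRingEnd ℂ) μm + t with hc
  have hmain : lindbladianRates H L γ ρ = c • ρ := by
    rw [lindbladianRates]
    have hsplit : ∑ k, (γ k : ℂ) •
        ((2 : ℂ) • (L k * ρ * (L k)ᴴ) - ((L k)ᴴ * L k * ρ + ρ * ((L k)ᴴ * L k)))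
        = t • ρ - S * ρ - ρ * S := by
      rw [← hsum3, ← hsum1, ← hsum2, ← Finset.sum_sub_distrib, ← Finset.sum_sub_distrib]
      refine Finset.sum_congr rfl fun k _ => ?_
      rw [smul_sub, smul_add]
      abel
    rw [hsplit, hc]
    have h1 : (-Complex.I) • (H * ρ - ρ * H)
        = -(Complex.I • (H * ρ)) + Complex.I • (ρ * H) := by module
    rw [h1, hHρ, hρH]
    module
  refine ⟨c.im, ?_⟩
  have hcre : c.re = 0 := by
    have h1 : c.re = -μn.re - μm.re + t.re := by
      rw [hc]
      simp [Complex.add_re, Complex.sub_re, Complex.neg_re, Complex.conj_re]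
    have h2 : t.re = ∑ k, γ k * (2 * (lamn k * (starRingEnd ℂ) (lamm k))).re := by
      rw [ht, Complex.re_sum]
      refine Finset.sum_congr rfl fun k _ => ?_
      have : (γ k : ℂ) * 2 * (lamn k * (starRingEnd ℂ) (lamm k))
          = (γ k : ℂ) * (2 * (lamn k * (starRingEnd ℂ) (lamm k))) := by ring
      rw [this, Complex.re_ofReal_mul]
    have h3 : (∑ k, (γ k : ℂ) *
        (2 * lamn k * (starRingEnd ℂ) (lamm k)
          - Complex.normSq (lamn k) - Complex.normSq (lamm k))).re
        = ∑ k, γ k * (2 * (lamn k * (starRingEnd ℂ) (lamm k))).re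
          - ∑ k, γ k * Complex.normSq (lamn k) - ∑ k, γ k * Complex.normSq (lamm k) := by
      rw [Complex.re_sum, ← Finset.sum_sub_distrib, ← Finset.sum_sub_distrib]
      refine Finset.sum_congr rfl fun k _ => ?_
      rw [Complex.re_ofReal_mul]
      have : (2 * lamn k * (starRingEnd ℂ) (lamm k)
          - Complex.normSq (lamn k) - Complex.normSq (lamm k)).re
          = (2 * (lamn k * (starRingEnd ℂ) (lamm k))).re
            - Complex.normSq (lamn k) - Complex.normSq (lamm k) := by
        simp [Complex.sub_re, Complex.ofReal_re, mul_assoc]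
      rw [this]; ring
    rw [h3, hRen, hRem] at hcond
    rw [h1, h2]
    linarith
  have hceq : c = Complex.I * (c.im : ℂ) := by
    apply Complex.ext <;>
      simp [Complex.mul_re, Complex.mul_im, hcre]
  rw [hmain, ← hceq]
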